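/- For n ≥ 2 and any term t in the free algebra on one n-ary symbol ⊗, t is equal to lmb(t) modulo the congruence generated by the n-Catalan equations ⊗(x₁,…,x_i, ⊗(x_{i+1},…,x_{i+n}), x_{i+n+1},…,x_{2n-1}) = ⊗(x₁,…,x_{i-1}, ⊗(x_i,…,x_{i+n-1}), x_{i+n},…,x_{2n-1}) for 0 < i < n. -/

import Mathlib

/-- Terms of the free algebra over variable set `V` with one n-ary operation ⊗. -/
inductive CTerm (n : ℕ) (V : Type*) : Type _
  | var (v : V) : CTerm n V
  | op (f : Fin n → CTerm n V) : CTerm n V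

/-- `brk i x` is the term ⊗(x₀,…,x_{i-1}, ⊗(x_i,…,x_{i+n-1}), x_{i+n},…,x_{2n-2}):
the n-ary tensor of the entries of `x` with one inner ⊗ placed at (0-based) position
`i`.  The Catalan rule α_i rewrites `brk i x` to `brk (i-1) x` for `0 < i < n`. -/
def brk {n : ℕ} {V : Type*} (i : ℕ) (x : ℕ → CTerm n V) : CTerm n V :=
  .op fun j => if (j : ℕ) < i then x (j : ℕ)
    else if (j : ℕ) = i then .op (fun k : Fin n => x (i + (k : ℕ)))
    else x ((j : ℕ) + n - 1)

/-- One rewrite step of the Catalan rewriting system: a rule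
α_i : ⊗(x₁,…,x_i, ⊗(x_{i+1},…,x_{i+n}), x_{i+n+1},…,x_{2n-1}) →
⊗(x₁,…,x_{i-1}, ⊗(x_i,…,x_{i+n-1}), x_{i+n},…,x_{2n-1}) (for 0 < i < n) applied at
some subterm position, with arbitrary terms substituted for the variables. -/
inductive CStep {n : ℕ} {V : Type*} : CTerm n V → CTerm n V → Prop
  | rule (i : ℕ) (h1 : 0 < i) (h2 : i < n) (x : ℕ → CTerm n V) :
      CStep (brk i x) (brk (i - 1) x)
  | congr {f g : Fin n → CTerm n V} (i : Fin n) :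
      CStep (f i) (g i) → (∀ j, j ≠ i → f j = g j) → CStep (.op f) (.op g)

/-- The underlying list of a term: its left-to-right sequence of variables. -/
def uList {n : ℕ} {V : Type*} : CTerm n V → List V
  | .var v => [v]
  | .op f => (List.ofFn fun i : Fin n => uList (f i)).flatten

/-- A term is a left-most bracketing iff every occurrence of ⊗ is nested in the first
argument only: all arguments other than the first are variables. -/
def IsLmb {n : ℕ} {V : Type*} : CTerm n V → Prop
  | .var _ => True
  | .op f => (∀ i : Fin n, (i : ℕ) = 0 → IsLmb (f i)) ∧
      (∀ i : Fin n, (i : ℕ) ≠ 0 → ∃ v, f i = .var v)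

/-- The smallest congruence on the free term algebra generated by all substitution
instances of the n-Catalan equations applied at arbitrary subterm positions. -/
inductive CnEq {n : ℕ} {V : Type*} : CTerm n V → CTerm n V → Prop
  | base (i : ℕ) (h1 : 0 < i) (h2 : i < n) (x : ℕ → CTerm n V) :
      CnEq (brk i x) (brk (i - 1) x)
  | refl (t : CTerm n V) : CnEq t t
  | symm {s t : CTerm n V} : CnEq s t → CnEq t s
  | trans {s t u : CTerm n V} : CnEq s t → CnEq t u → CnEq s u
  | congr {f g : Fin n → CTerm n V} : (∀ i, CnEq (f i) (g i)) → CnEq (.op f) (.op g)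

/-!
Every Catalan equation has the same variables `x₀, …, x_{2n-2}` in the same order on both
sides, so `uList` is invariant under `CnEq`, and it suffices to rewrite every term into some
left-most bracketing. By induction on the term, all arguments of the root may be assumed
left-most bracketed. Read from left to right, the rule `α_{k+1}` turns
`⊗(…, f_k, ⊗(g₀, …, g_{n-1}), …)` into `⊗(…, ⊗(f_k, g₀, …, g_{n-2}), g_{n-1}, …)`: applied at
the last argument of the root that is not a variable, it moves that position one step to the
left and leaves the variable `g_{n-1}` behind. The new inner term `⊗(f_k, g₀, variables)` is
normalized in the same way, by induction on `g₀`.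
-/

theorem List.ofFn_val_eq_map_range {α : Type*} (m : ℕ) (F : ℕ → α) :
    List.ofFn (fun j : Fin m => F j) = (List.range m).map F :=
  List.ext_getElem (by simp) (by simp)

open Function

namespace CTerm
variable {n : ℕ} {V : Type*}

theorem uList_brk {i : ℕ} (hi : i < n) (x : ℕ → CTerm n V) :
    uList (brk i x) = (List.range (2 * n - 1)).flatMap fun p => uList (x p) := by
  have hblocks : ∀ {m} a b c, m = a + b + c →
      List.range m = List.range' 0 a ++ List.range' a b ++ List.range' (a + b) c := by
    rintro _ a b c rfl
    rw [List.range_eq_range', ← List.range'_append, ← List.range'_append]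
    simp
  have hroot : uList (brk i x) = (List.range n).flatMap fun p =>
      if p < i then uList (x p)
      else if p = i then (List.range' i n).flatMap fun p => uList (x p)
      else uList (x (p + n - 1)) := by
    simp only [uList, brk, List.flatMap_def]
    rw [← List.ofFn_val_eq_map_range]
    congr! 3 with j
    split_ifs
    · rfl
    · simp only [uList, List.range'_eq_map_range, List.map_map]
      rw [← List.ofFn_val_eq_map_range]; rfl
    · rfl
  rw [hroot, hblocks i 1 (n - 1 - i) (by omega), hblocks i n (n - 1 - i) (by omega)]
  simp only [List.flatMap_append]
  congr 1
  congr 1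
  · refine List.flatMap_congr fun p hp => ?_
    have := List.mem_range'_1.1 hp
    rw [if_pos (by omega)]
  · simp
  · have hshift : List.range' (i + n) (n - 1 - i)
        = (List.range' (i + 1) (n - 1 - i)).map (n - 1 + ·) := by
      rw [List.map_add_range']; congr 1; omega
    rw [hshift, List.flatMap_map]
    refine List.flatMap_congr fun p hp => ?_
    have := List.mem_range'_1.1 hp
    rw [if_neg (by omega), if_neg (by omega)]
    congr 2; omega

theorem _root_.CnEq.uList_eq {s t : CTerm n V} (h : CnEq s t) : uList s = uList t := by
  induction h with
  | base i _ hi x => rw [uList_brk hi x, uList_brk (by omega) x]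
  | refl t => rfl
  | symm _ ih => exact ih.symm
  | trans _ _ ih₁ ih₂ => exact ih₁.trans ih₂
  | congr _ ih => simp only [uList, ih]

/-- The variables `f₀, …, f_k, g₀, …, g_{n-1}, f_{k+2}, …, f_{n-1}` (here `n = m + 2`) of the
instance of the Catalan rule `α_{k+1}` whose left side is `op f` with `f (k + 1) = op g`;
the `min` only clamps indices past `2n - 2`, where the value is irrelevant. -/
def spliceArgs {m : ℕ} (f g : Fin (m + 2) → CTerm (m + 2) V) (k : Fin (m + 1)) :
    ℕ → CTerm (m + 2) V := fun p =>
  if h : p ≤ k then f ⟨p, by omega⟩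
  else if h' : p < k + m + 3 then g ⟨p - k - 1, by omega⟩
  else f ⟨min (p - m - 1) (m + 1), by omega⟩

theorem op_eq_brk_spliceArgs {m : ℕ} {f g : Fin (m + 2) → CTerm (m + 2) V} {k : Fin (m + 1)}
    (hg : f k.succ = op g) : op f = brk (k + 1) (spliceArgs f g k) := by
  simp only [brk]
  congr 1
  funext j
  split_ifs with h₁ h₂
  · simp only [spliceArgs, dif_pos (Nat.le_of_lt_succ h₁)]
  · rw [show j = k.succ from Fin.ext h₂, hg]
    congr 1
    funext q
    simp only [spliceArgs]
    rw [dif_neg (by omega), dif_pos (by omega)]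
    congr 1; ext; simp only; omega
  · simp only [spliceArgs]
    rw [dif_neg (by omega), dif_neg (by omega)]
    congr 1; ext; simp only; omega

theorem brk_spliceArgs {m : ℕ} (f g : Fin (m + 2) → CTerm (m + 2) V) (k : Fin (m + 1)) :
    brk k (spliceArgs f g k) = op (update (update f k.succ (g (Fin.last _))) k.castSucc
      (op (Fin.cons (f k.castSucc) (Fin.init g)))) := by
  simp only [brk]
  congr 1
  funext j
  simp only [update_apply, Fin.ext_iff, Fin.val_succ, Fin.val_castSucc]
  split_ifs with h₁ h₂ h₃ h₄ h₅ <;> try omega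
  · simp only [spliceArgs, dif_pos h₁.le]
  · congr 1
    funext q
    refine Fin.cases ?_ (fun q => ?_) q
    · simp only [spliceArgs, Fin.cons_zero, Fin.val_zero, add_zero, dif_pos le_rfl]
      rfl
    · simp only [spliceArgs, Fin.cons_succ, Fin.init, Fin.val_succ]
      rw [dif_neg (by omega), dif_pos (by omega)]
      congr 1; ext; simp only [Fin.val_castSucc]; omega
  · simp only [spliceArgs]
    rw [dif_neg (by omega), dif_pos (by omega)]
    congr 1; ext; simp only [Fin.val_last]; omega
  · simp only [spliceArgs]
    rw [dif_neg (by omega), dif_neg (by omega)]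
    congr 1; ext; simp only; omega

theorem cnEq_op_rotate {m : ℕ} (f : Fin (m + 2) → CTerm (m + 2) V) (k : Fin (m + 1))
    {g : Fin (m + 2) → CTerm (m + 2) V} (hg : f k.succ = op g) {c : CTerm (m + 2) V}
    (hc : CnEq (op (Fin.cons (f k.castSucc) (Fin.init g))) c) :
    CnEq (op f) (op (update (update f k.succ (g (Fin.last _))) k.castSucc c)) := by
  have hrule := CnEq.base (k + 1) (Nat.succ_pos _) (by omega) (spliceArgs f g k)
  rw [← op_eq_brk_spliceArgs hg, Nat.add_sub_cancel, brk_spliceArgs] at hrule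
  refine hrule.trans (CnEq.congr fun j => ?_)
  rcases eq_or_ne j k.castSucc with rfl | hj
  · simpa only [update_self] using hc
  · simp only [update_of_ne hj]
    exact .refl _

theorem isLmb_op_iff {m : ℕ} (f : Fin (m + 1) → CTerm (m + 1) V) :
    IsLmb (op f) ↔ IsLmb (f 0) ∧ ∀ i ≠ 0, ∃ v, f i = var v := by
  simp only [IsLmb, Fin.val_eq_zero_iff, forall_eq, ne_eq]

theorem exists_last_eq_var {m : ℕ} {g : Fin (m + 2) → CTerm (m + 2) V} (hg : IsLmb (op g)) :
    ∃ v, g (Fin.last _) = var v :=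
  ((isLmb_op_iff g).1 hg).2 _ Fin.last_pos.ne'

theorem exists_cons_init_eq_var {m : ℕ} (a : CTerm (m + 2) V) {g : Fin (m + 2) → CTerm (m + 2) V}
    (hg : IsLmb (op g)) {i : Fin (m + 2)} (h₀ : i ≠ 0) (h₁ : i ≠ 1) :
    ∃ v, (Fin.cons a (Fin.init g) : Fin (m + 2) → CTerm (m + 2) V) i = var v := by
  obtain ⟨j, rfl⟩ := Fin.exists_succ_eq.2 h₀
  have hj : j ≠ 0 := by rintro rfl; exact h₁ rfl
  exact ((isLmb_op_iff g).1 hg).2 _ (Fin.castSucc_ne_zero_iff.2 hj)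

theorem exists_isLmb_cnEq_op_cons_init {m : ℕ} {a : CTerm (m + 2) V}
    {g : Fin (m + 2) → CTerm (m + 2) V} (ha : IsLmb a) (hg : IsLmb (op g)) :
    ∃ c, IsLmb c ∧ CnEq (op (Fin.cons a (Fin.init g))) c := by
  obtain ⟨b, hb⟩ : ∃ b, g 0 = b := ⟨_, rfl⟩
  induction b generalizing a g with
  | var w =>
    refine ⟨_, (isLmb_op_iff _).2 ⟨ha, fun i h₀ => ?_⟩, .refl _⟩
    rcases eq_or_ne i 1 with rfl | h₁
    · exact ⟨w, hb⟩
    · exact exists_cons_init_eq_var a hg h₀ h₁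
  | op g' ih =>
    have hg' : IsLmb (op g') := hb ▸ ((isLmb_op_iff g).1 hg).1
    obtain ⟨c, hc, hcE⟩ := ih 0 ha hg' rfl
    refine ⟨_, ?_, cnEq_op_rotate (Fin.cons a (Fin.init g)) 0 hb hcE⟩
    refine (isLmb_op_iff _).2 ⟨by simpa using hc, fun i h₀ => ?_⟩
    rw [Fin.castSucc_zero, update_of_ne h₀, Fin.succ_zero_eq_one]
    rcases eq_or_ne i 1 with rfl | h₁
    · simpa using exists_last_eq_var hg'
    · rw [update_of_ne h₁]
      exact exists_cons_init_eq_var a hg h₀ h₁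

theorem exists_isLmb_cnEq_op_of_var_gt {m : ℕ} (k : ℕ) {f : Fin (m + 2) → CTerm (m + 2) V}
    (hf : ∀ j, IsLmb (f j)) (hvar : ∀ j : Fin (m + 2), k < j → ∃ v, f j = var v) :
    ∃ u, IsLmb u ∧ CnEq (op f) u := by
  induction k generalizing f with
  | zero =>
    refine ⟨op f, (isLmb_op_iff f).2 ⟨hf 0, fun j hj => hvar j ?_⟩, .refl _⟩
    exact Nat.pos_of_ne_zero (Fin.val_ne_zero_iff.2 hj)
  | succ k ih =>
    by_cases hk : k < m + 1
    swap
    · exact ih hf fun j hj => absurd j.isLt (by omega)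
    obtain ⟨i, rfl⟩ : ∃ i : Fin (m + 1), (i : ℕ) = k := ⟨⟨k, hk⟩, rfl⟩
    have hvar_of_ne {j : Fin (m + 2)} (hj : (i : ℕ) < j) (hne : j ≠ i.succ) :
        ∃ v, f j = var v := by
      have := Fin.val_ne_iff.2 hne
      rw [Fin.val_succ] at this
      exact hvar j (by omega)
    cases hsucc : f i.succ with
    | var w =>
      refine ih hf fun j hj => ?_
      rcases eq_or_ne j i.succ with rfl | hne
      · exact ⟨w, hsucc⟩
      · exact hvar_of_ne hj hne
    | op g =>
      have hg : IsLmb (op g) := hsucc ▸ hf i.succ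
      obtain ⟨c, hc, hcE⟩ := exists_isLmb_cnEq_op_cons_init (hf i.castSucc) hg
      set f' := update (update f i.succ (g (Fin.last _))) i.castSucc c
      have hf' : ∀ j, IsLmb (f' j) := by
        intro j
        simp only [f', update_apply]
        split_ifs
        · exact hc
        · obtain ⟨v, hv⟩ := exists_last_eq_var hg
          rw [hv]
          trivial
        · exact hf j
      have hvar' : ∀ j : Fin (m + 2), (i : ℕ) < j → ∃ v, f' j = var v := by
        intro j hj
        simp only [f', update_apply]
        split_ifs with h₁ h₂
        · exact absurd (h₁ ▸ hj) (lt_irrefl _)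
        · exact exists_last_eq_var hg
        · exact hvar_of_ne hj h₂
      obtain ⟨u, hu, huE⟩ := ih hf' hvar'
      exact ⟨u, hu, (cnEq_op_rotate f i hsucc hcE).trans huE⟩

theorem exists_isLmb_cnEq {m : ℕ} (t : CTerm (m + 2) V) : ∃ u, IsLmb u ∧ CnEq t u := by
  induction t with
  | var v => exact ⟨var v, trivial, .refl _⟩
  | op f ih =>
    choose u hu hfu using ih
    obtain ⟨w, hw, huw⟩ :=
      exists_isLmb_cnEq_op_of_var_gt (m + 1) hu fun j hj => absurd j.isLt (by omega)
    exact ⟨w, hw, (CnEq.congr hfu).trans huw⟩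

end CTerm

/-- modulo the congruence generated by the n-Catalan equations, every
term is equal to its left-most bracketing (the left-most bracketed term with the same
underlying variable list). -/
theorem stmt_12 {n : ℕ} (hn : 2 ≤ n) {V : Type*} (t : CTerm n V) :
    ∃ u : CTerm n V, IsLmb u ∧ uList u = uList t ∧ CnEq t u := by
  obtain ⟨m, rfl⟩ : ∃ m, n = m + 2 := ⟨n - 2, by omega⟩
  obtain ⟨u, hu, htu⟩ := CTerm.exists_isLmb_cnEq t
  exact ⟨u, hu, htu.uList_eq.symm, htu⟩
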